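/- The Lie algebra so(3) × so(3) (equivalently so(4)) admits an integrable complex structure: the linear map 𝒥 determined by 𝒥(e₁₂,0) = (0,e₁₂), 𝒥(0,e₁₂) = (-e₁₂,0), 𝒥(e₁₃,0) = (e₂₃,0), 𝒥(e₂₃,0) = (-e₁₃,0), 𝒥(0,e₁₃) = (0,e₂₃), 𝒥(0,e₂₃) = (0,-e₁₃) satisfies 𝒥² = -id and has vanishing Nijenhuis tensor. -/

import Mathlib

/-!
With `𝒥² = -1` the Nijenhuis tensor is antisymmetric and satisfies `N(𝒥x, y) = -𝒥 N(x, y)`, i.e. it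
is complex antilinear in each argument. The vectors `(e₁₂, 0)`, `(e₁₃, 0)`, `(0, e₁₃)` together with
their images under `𝒥` form a real basis of `so(3) × so(3)`, so `N` vanishes as soon as it vanishes
on the three pairs of distinct vectors among them, which is a direct computation with the brackets.
-/

/-- Componentwise bracket on the product. -/
instance prodBracket {L : Type*} [LieRing L] : Bracket (L × L) (L × L) :=
  ⟨fun x y => (⁅x.1, y.1⁆, ⁅x.2, y.2⁆)⟩

instance prodLieRing {L : Type*} [LieRing L] : LieRing (L × L) where
  add_lie x y z := by ext <;> simp [Bracket.bracket]
  lie_add x y z := by ext <;> simp [Bracket.bracket]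
  lie_self x := by ext <;> simp [Bracket.bracket]
  leibniz_lie x y z := by ext <;> simp [Bracket.bracket]

instance prodLieAlgebra {L : Type*} [LieRing L] [LieAlgebra ℝ L] : LieAlgebra ℝ (L × L) where
  lie_smul t x y := by ext <;> simp [Bracket.bracket]

section Nijenhuis

variable {R L : Type*} [CommRing R] [LieRing L] [LieAlgebra R L] (J : Module.End R L)

def nijenhuis : L →ₗ[R] L →ₗ[R] L :=
  let lie : L →ₗ[R] L →ₗ[R] L := LieModule.toEnd R L L
  lie + (lie.comp J).compr₂ J + (lie.compl₂ J).compr₂ J - (lie.comp J).compl₂ J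

variable {J}

@[simp]
theorem nijenhuis_apply (x y : L) :
    nijenhuis J x y = ⁅x, y⁆ + J ⁅J x, y⁆ + J ⁅x, J y⁆ - ⁅J x, J y⁆ := rfl

theorem nijenhuis_self (x : L) : nijenhuis J x x = 0 := by
  rw [nijenhuis_apply, ← lie_skew x (J x), map_neg]
  simp

theorem nijenhuis_swap (x y : L) : nijenhuis J y x = -nijenhuis J x y := by
  simp only [nijenhuis_apply]
  rw [← lie_skew y x, ← lie_skew (J y) x, ← lie_skew y (J x), ← lie_skew (J y) (J x)]
  simp only [map_neg]
  abel

theorem nijenhuis_apply_left (hJ : ∀ x, J (J x) = -x) (x y : L) :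
    nijenhuis J (J x) y = -J (nijenhuis J x y) := by
  simp only [nijenhuis_apply, hJ, map_add, map_sub, neg_lie, map_neg]
  abel

theorem nijenhuis_apply_right (hJ : ∀ x, J (J x) = -x) (x y : L) :
    nijenhuis J x (J y) = -J (nijenhuis J x y) := by
  rw [nijenhuis_swap, nijenhuis_apply_left hJ, nijenhuis_swap, map_neg, neg_neg]

theorem nijenhuis_eq_zero_of_basis {ι κ : Type*} [LinearOrder ι] (hJ : ∀ x, J (J x) = -x)
    (e : Module.Basis κ R L) (u : ι → L) (he : ∀ k, ∃ i, e k = u i ∨ e k = J (u i))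
    (hu : ∀ i j, i < j → nijenhuis J (u i) (u j) = 0) : nijenhuis J = 0 := by
  have hu' : ∀ i j, nijenhuis J (u i) (u j) = 0 := by
    intro i j
    rcases lt_trichotomy i j with hij | rfl | hij
    · exact hu i j hij
    · exact nijenhuis_self _
    · rw [nijenhuis_swap, hu j i hij, neg_zero]
  refine LinearMap.ext_basis e e fun k l => ?_
  obtain ⟨i, hk | hk⟩ := he k <;> obtain ⟨j, hl | hl⟩ := he l <;>
    simp [hk, hl, nijenhuis_apply_left hJ, nijenhuis_apply_right hJ, hu' i j, -nijenhuis_apply]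

end Nijenhuis

theorem apply_apply_eq_neg_of_basis {R L ι κ : Type*} [CommRing R] [AddCommGroup L] [Module R L]
    {J : Module.End R L} (e : Module.Basis κ R L) (u : ι → L)
    (he : ∀ k, ∃ i, e k = u i ∨ e k = J (u i)) (hu : ∀ i, J (J (u i)) = -u i) (x : L) :
    J (J x) = -x := by
  suffices J ∘ₗ J = -LinearMap.id from LinearMap.congr_fun this x
  refine e.ext fun k => ?_
  obtain ⟨i, hk | hk⟩ := he k <;> simp [hk, hu]

section So4

variable {R M : Type*} [CommRing R] [AddCommGroup M] [Module R M] (b : Module.Basis (Fin 3) R M)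

noncomputable def so4ComplexStructure : Module.End R (M × M) :=
  (b.prod b).constr R (Sum.elim ![(0, b 0), (b 2, 0), (-b 1, 0)] ![(-b 0, 0), (0, b 2), (0, -b 1)])

@[simp]
theorem so4ComplexStructure_apply_inl (i : Fin 3) :
    so4ComplexStructure b (b i, 0) = ![(0, b 0), (b 2, 0), (-b 1, 0)] i := by
  have hk : b.prod b (Sum.inl i) = (b i, 0) := by simp
  rw [← hk, so4ComplexStructure, Module.Basis.constr_basis]
  rfl

@[simp]
theorem so4ComplexStructure_apply_inr (i : Fin 3) :
    so4ComplexStructure b (0, b i) = ![(-b 0, 0), (0, b 2), (0, -b 1)] i := by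
  have hk : b.prod b (Sum.inr i) = (0, b i) := by simp
  rw [← hk, so4ComplexStructure, Module.Basis.constr_basis]
  rfl

noncomputable def so4ComplexBasis : Fin 3 → M × M := ![(b 0, 0), (b 1, 0), (0, b 1)]

theorem exists_so4ComplexBasis (k : Fin 3 ⊕ Fin 3) : ∃ i, b.prod b k = so4ComplexBasis b i ∨
    b.prod b k = so4ComplexStructure b (so4ComplexBasis b i) := by
  rcases k with i | i <;> fin_cases i
  exacts [⟨0, .inl (by simp [so4ComplexBasis])⟩, ⟨1, .inl (by simp [so4ComplexBasis])⟩,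
    ⟨1, .inr (by simp [so4ComplexBasis])⟩, ⟨0, .inr (by simp [so4ComplexBasis])⟩,
    ⟨2, .inl (by simp [so4ComplexBasis])⟩, ⟨2, .inr (by simp [so4ComplexBasis])⟩]

theorem so4ComplexStructure_apply_apply (x : M × M) :
    so4ComplexStructure b (so4ComplexStructure b x) = -x := by
  refine apply_apply_eq_neg_of_basis (b.prod b) _ (exists_so4ComplexBasis b) (fun i => ?_) x
  fin_cases i <;> simp [so4ComplexBasis]

end So4

theorem nijenhuis_so4ComplexStructure_eq_zero {g : Type*} [LieRing g] [LieAlgebra ℝ g]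
    (b : Module.Basis (Fin 3) ℝ g) (h1 : ⁅b 0, b 2⁆ = b 1) (h2 : ⁅b 0, b 1⁆ = -b 2) :
    nijenhuis (so4ComplexStructure b) = 0 := by
  refine nijenhuis_eq_zero_of_basis (so4ComplexStructure_apply_apply b) (b.prod b) _
    (exists_so4ComplexBasis b) fun i j hij => ?_
  have h_zero_neg : ∀ x : g, ((0 : g), -x) = -(0, x) := fun x => by simp
  fin_cases i <;> fin_cases j <;>
    simp [so4ComplexBasis, h1, h2, h_zero_neg, Prod.mk_zero_zero, -Prod.neg_mk] at hij ⊢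

theorem so3_product_explicit_integrable_complex_structure_general
    {g : Type*} [LieRing g] [LieAlgebra ℝ g]
    (b : Module.Basis (Fin 3) ℝ g)
    -- `b 0 = e₁₂`, `b 1 = e₁₃`, `b 2 = e₂₃`
    (h1 : ⁅b 0, b 2⁆ = b 1) (h2 : ⁅b 0, b 1⁆ = -b 2) :
    ∃ 𝒥 : (g × g) →ₗ[ℝ] (g × g),
      𝒥 (b 0, 0) = (0, b 0) ∧ 𝒥 (0, b 0) = (-b 0, 0) ∧
      𝒥 (b 1, 0) = (b 2, 0) ∧ 𝒥 (b 2, 0) = (-b 1, 0) ∧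
      𝒥 (0, b 1) = (0, b 2) ∧ 𝒥 (0, b 2) = (0, -b 1) ∧
      (∀ x, 𝒥 (𝒥 x) = -x) ∧
      (∀ x y : g × g,
        ⁅x, y⁆ + 𝒥 ⁅𝒥 x, y⁆ + 𝒥 ⁅x, 𝒥 y⁆ - ⁅𝒥 x, 𝒥 y⁆ = 0) := by
  refine ⟨so4ComplexStructure b, by simp, by simp, by simp, by simp, by simp, by simp,
    so4ComplexStructure_apply_apply b, fun x y => ?_⟩
  simpa using LinearMap.congr_fun₂ (nijenhuis_so4ComplexStructure_eq_zero b h1 h2) x y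

theorem so3_product_explicit_integrable_complex_structure
    {g : Type*} [LieRing g] [LieAlgebra ℝ g]
    (b : Module.Basis (Fin 3) ℝ g)
    -- `b 0 = e₁₂`, `b 1 = e₁₃`, `b 2 = e₂₃`
    (h1 : ⁅b 0, b 2⁆ = b 1) (h2 : ⁅b 0, b 1⁆ = -b 2) (h3 : ⁅b 1, b 2⁆ = b 0) :
    ∃ 𝒥 : (g × g) →ₗ[ℝ] (g × g),
      𝒥 (b 0, 0) = (0, b 0) ∧ 𝒥 (0, b 0) = (-b 0, 0) ∧
      𝒥 (b 1, 0) = (b 2, 0) ∧ 𝒥 (b 2, 0) = (-b 1, 0) ∧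
      𝒥 (0, b 1) = (0, b 2) ∧ 𝒥 (0, b 2) = (0, -b 1) ∧
      (∀ x, 𝒥 (𝒥 x) = -x) ∧
      (∀ x y : g × g,
        ⁅x, y⁆ + 𝒥 ⁅𝒥 x, y⁆ + 𝒥 ⁅x, 𝒥 y⁆ - ⁅𝒥 x, 𝒥 y⁆ = 0) :=
  so3_product_explicit_integrable_complex_structure_general b h1 h2
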